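/- arXiv:2406.19481 — 6 statements merged into one kernel-verified Lean document; each statement's English description precedes it below -/
import Mathlib

section
/- Let n ≥ 1 and q ≥ 2 be integers. Let G be the cyclic group Multiplicative (ZMod n), and let ρ be the ℤ-linear representation of G on ZMod (q^n − 1) under which Multiplicative.ofAdd j acts by multiplication by q^(j.val) (this is well defined since q^n ≡ 1 mod (q^n − 1)). Then the group cohomology of G with coefficients in ρ vanishes in all positive degrees: H^s(G; ρ) ≅ 0 for every s ≥ 1. -/
/-!
For a finite cyclic group generated by `σ`, positive-degree cohomology is 2-periodic:
`H^odd = ker N / (σ - 1) M` and `H^even = ker (σ - 1) / N M`. Here `σ` acts on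
`M = ℤ/(q^n - 1)` by `q` and the norm `N` by `m = 1 + q + ⋯ + q^(n-1)`. Since
`q^n - 1 = (q - 1) m` with both factors nonzero, and on `ℤ/(ab)` with `a ≠ 0` the kernel of
multiplication by `a` is the image of multiplication by `b`, both quotients vanish.
-/

open CategoryTheory Limits

universe u

namespace Rep.FiniteCyclicGroup

theorem isZero_groupCohomology_of_ker_le_range {k G : Type u} [CommRing k] [CommGroup G]
    [Fintype G] (A : Rep k G) (g : G) (hg : ∀ x, x ∈ Subgroup.zpowers g)
    (hodd : LinearMap.ker A.ρ.norm ≤ LinearMap.range (A.ρ g - 1))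
    (heven : LinearMap.ker (A.ρ g - 1) ≤ LinearMap.range A.ρ.norm)
    {s : ℕ} (hs : s ≠ 0) : IsZero (groupCohomology A s) := by
  rcases Nat.even_or_odd s with he | ho
  · have : NeZero s := ⟨hs⟩
    refine IsZero.of_iso ?_ (groupCohomologyIsoEven A g hg s he)
    rw [← ShortComplex.exact_iff_isZero_homology, ShortComplex.moduleCat_exact_iff]
    exact fun x hx => heven (by simpa [sub_hom] using hx)
  · refine IsZero.of_iso ?_ (groupCohomologyIsoOdd A g hg s ho)
    rw [← ShortComplex.exact_iff_isZero_homology, ShortComplex.moduleCat_exact_iff]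
    exact fun x hx => by simpa [sub_hom] using hodd hx

end Rep.FiniteCyclicGroup

namespace ZMod

theorem natCast_self_sub_one {m : ℕ} (hm : 1 ≤ m) : (m : ZMod (m - 1)) = 1 := by
  calc (m : ZMod (m - 1)) = ((m - 1 + 1 : ℕ) : ZMod (m - 1)) :=
        congrArg (fun k : ℕ => (k : ZMod (m - 1))) (Nat.sub_add_cancel hm).symm
    _ = 1 := by rw [Nat.cast_succ, ZMod.natCast_self, zero_add]

theorem exists_eq_mul_of_mul_eq_zero {N a b : ℕ} (hN : N = a * b) (ha : a ≠ 0) {x : ZMod N}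
    (hx : (a : ZMod N) * x = 0) : ∃ y : ZMod N, x = b * y := by
  subst hN
  have hdvd : (a : ℤ) * b ∣ a * (x.cast : ℤ) := by
    rw [← Nat.cast_mul, ← ZMod.intCast_zmod_eq_zero_iff_dvd]
    push_cast
    exact hx
  obtain ⟨z, hz⟩ := Int.dvd_of_mul_dvd_mul_left (Int.natCast_ne_zero.2 ha) hdvd
  exact ⟨z, by rw [← ZMod.intCast_zmod_cast x, hz]; push_cast; rfl⟩

theorem sum_val_eq_sum_range {M : Type*} [AddCommMonoid M] (n : ℕ) [NeZero n] (f : ℕ → M) :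
    ∑ j : ZMod n, f j.val = ∑ i ∈ Finset.range n, f i := by
  obtain ⟨k, rfl⟩ : ∃ k, n = k + 1 := Nat.exists_eq_succ_of_ne_zero (NeZero.ne n)
  exact Fin.sum_univ_eq_sum_range f (k + 1)

theorem mem_zpowers_ofAdd_one {n : ℕ} (x : Multiplicative (ZMod n)) :
    x ∈ Subgroup.zpowers (Multiplicative.ofAdd 1) :=
  Subgroup.mem_zpowers_iff.2 ⟨(Multiplicative.toAdd x).cast, by
    rw [← ofAdd_zsmul, zsmul_one, ZMod.intCast_zmod_cast, ofAdd_toAdd]⟩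

end ZMod

namespace ZModPowRep

variable {n q : ℕ} {ρ : Representation ℤ (Multiplicative (ZMod n)) (ZMod (q ^ n - 1))}
  (hρ : ∀ (j : ZMod n) (x : ZMod (q ^ n - 1)),
    ρ (Multiplicative.ofAdd j) x = (q : ZMod (q ^ n - 1)) ^ j.val * x)
include hρ

theorem ofAdd_one_apply (hq : 1 ≤ q) (x : ZMod (q ^ n - 1)) :
    ρ (Multiplicative.ofAdd 1) x = q * x := by
  have hqn : (q : ZMod (q ^ n - 1)) ^ n = 1 := by
    rw [← Nat.cast_pow]
    exact ZMod.natCast_self_sub_one (Nat.one_le_pow _ _ hq)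
  rw [hρ, ZMod.val_one_eq_one_mod, ← pow_eq_pow_mod 1 hqn, pow_one]

theorem norm_apply [NeZero n] (x : ZMod (q ^ n - 1)) :
    ρ.norm x = ((∑ i ∈ Finset.range n, q ^ i : ℕ) : ZMod (q ^ n - 1)) * x := by
  rw [Representation.norm, LinearMap.sum_apply, ← Multiplicative.ofAdd.sum_comp]
  calc ∑ j : ZMod n, ρ (Multiplicative.ofAdd j) x
      = ∑ j : ZMod n, (q : ZMod (q ^ n - 1)) ^ j.val * x := by simp only [hρ]
    _ = _ := by
      rw [← Finset.sum_mul, ZMod.sum_val_eq_sum_range n (fun i => (q : ZMod (q ^ n - 1)) ^ i)]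
      push_cast
      rfl

end ZModPowRep

/-- Let `n ≥ 1`, `q ≥ 2`, `G = Multiplicative (ZMod n)`, and let `ρ`
be the ℤ-linear representation of `G` on `ZMod (q^n - 1)` where `Multiplicative.ofAdd j`
acts by multiplication by `q ^ j.val`.  Then the group cohomology `H^s(G; ρ)` vanishes
for all `s ≥ 1`. -/
theorem stmt_6 (n q : ℕ) (hn : 1 ≤ n) (hq : 2 ≤ q)
    (ρ : Representation ℤ (Multiplicative (ZMod n)) (ZMod (q ^ n - 1)))
    (hρ : ∀ (j : ZMod n) (x : ZMod (q ^ n - 1)),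
      ρ (Multiplicative.ofAdd j) x = (q : ZMod (q ^ n - 1)) ^ j.val * x)
    (s : ℕ) (hs : 1 ≤ s) :
    CategoryTheory.Limits.IsZero (groupCohomology (Rep.of ρ) s) := by
  have : NeZero n := ⟨by omega⟩
  set m := ∑ i ∈ Finset.range n, q ^ i
  have hm : m ≠ 0 :=
    (Finset.sum_pos (fun i _ => by positivity) (Finset.nonempty_range_iff.2 (by omega))).ne'
  have hmod : q ^ n - 1 = (q - 1) * m :=
    ((mul_comm _ _).trans (geom_sum_mul_of_one_le (by omega) n)).symm
  have hsub (y : ZMod (q ^ n - 1)) :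
      ρ (Multiplicative.ofAdd 1) y - y = ((q - 1 : ℕ) : ZMod (q ^ n - 1)) * y := by
    rw [ZModPowRep.ofAdd_one_apply hρ (by omega), Nat.cast_sub (by omega)]
    ring
  refine Rep.FiniteCyclicGroup.isZero_groupCohomology_of_ker_le_range (Rep.of ρ) _
    ZMod.mem_zpowers_ofAdd_one ?_ ?_ (by omega)
  · intro x hx
    rw [LinearMap.mem_ker, Rep.of_ρ, ZModPowRep.norm_apply hρ] at hx
    obtain ⟨y, rfl⟩ := ZMod.exists_eq_mul_of_mul_eq_zero (hmod.trans (mul_comm _ _)) hm hx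
    exact ⟨y, hsub y⟩
  · intro x hx
    obtain ⟨y, rfl⟩ := ZMod.exists_eq_mul_of_mul_eq_zero hmod (by omega) ((hsub x).symm.trans hx)
    exact ⟨y, ZModPowRep.norm_apply hρ y⟩
end

section
/- Let n ≥ 1 and q ≥ 2 be integers. Let G be the cyclic group Multiplicative (ZMod n), and let ρ be the ℤ-linear representation of G on ZMod (q^n − 1) under which Multiplicative.ofAdd j acts by multiplication by q^(j.val). Then the group homology of G with coefficients in ρ vanishes in all positive degrees: H_s(G; ρ) ≅ 0 for every s ≥ 1. -/
open CategoryTheory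

/-- Group homology `H_s(G; A)` of a commutative group `G` with coefficients in a
`ℤ`-linear representation `A`, defined as `Tor_s^{ℤ[G]}(ℤ, A)`, where `ℤ` carries the
trivial `G`-action and `A` is viewed as a module over the group ring `ℤ[G]`. -/
noncomputable def groupHomology' {G : Type} [CommGroup G] (A : Rep ℤ G) (s : ℕ) :
    ModuleCat (MonoidAlgebra ℤ G) :=
  ((Tor (ModuleCat (MonoidAlgebra ℤ G)) s).obj
      (Rep.equivalenceModuleMonoidAlgebra.functor.obj (Rep.trivial ℤ G ℤ))).obj
    (Rep.equivalenceModuleMonoidAlgebra.functor.obj A)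

/-!
Let `σ ∈ ℤ[G]` be the generator of `G = ℤ/n`; it acts on `ℤ/(q^n - 1)` as multiplication by `q`.
Modulo `σ - q` every element of `ℤ[G]` is an integer, and `q^n - 1 ∈ (σ - q)` because `σ^n = 1`,
so `f ↦ f • 1` identifies `ρ` with `ℤ[G]/(σ - q)`. The relation `σ^n = 1` also shows that
`σ - q` kills nothing that `q^n - 1` does not kill, so it is a non-zero-divisor and
`0 → ℤ[G] --(σ - q)--> ℤ[G] → ρ → 0` is a free resolution. Tensored with the trivial module `ℤ`
it becomes `ℤ --(1 - q)--> ℤ`, which is injective since `q ≠ 1`; hence `Tor_s(ℤ, ρ) = 0` for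
all `s ≥ 1`.
-/

open CategoryTheory.Limits MonoidalCategory MonoidAlgebra

universe u

section

variable {C : Type*} [Category C] [Abelian C]

lemma ChainComplex.exactAt_succ_of_mono_d_one_zero {K : ChainComplex C ℕ} (hd : Mono (K.d 1 0))
    (hX : ∀ i, IsZero (K.X (i + 2))) (i : ℕ) : K.ExactAt (i + 1) := by
  rw [HomologicalComplex.exactAt_iff' K (i + 2) (i + 1) i (by simp) (by simp)]
  cases i with
  | zero => exact (ShortComplex.exact_iff_mono _ ((hX 0).eq_of_src _ _)).2 hd
  | succ i => exact ShortComplex.exact_of_isZero_X₂ _ (hX i)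

end

namespace ModuleCat

variable {R : Type u} [CommRing R] (c : R)

def smulComplex : ChainComplex (ModuleCat.{u} R) ℕ :=
  ChainComplex.of
    (fun | 0 | 1 => ModuleCat.of R R | _ + 2 => ModuleCat.of R PUnit)
    (fun | 0 => c • 𝟙 _ | _ + 1 => 0)
    (fun | 0 | _ + 1 => by simp)

lemma smulComplex_d_one_zero : (smulComplex c).d 1 0 = c • 𝟙 (ModuleCat.of R R) := by
  simp only [smulComplex]
  exact ChainComplex.of_d _ _ 0

lemma smulComplex_d_one_zero_apply (x : R) : (smulComplex c).d 1 0 x = c * x := by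
  rw [smulComplex_d_one_zero]
  rfl

lemma isZero_smulComplex_X_add_two (i : ℕ) : IsZero ((smulComplex c).X (i + 2)) :=
  isZero_of_subsingleton (ModuleCat.of R PUnit)

noncomputable def smulComplexπ :
    smulComplex c ⟶ (ChainComplex.single₀ _).obj (ModuleCat.of R (R ⧸ Ideal.span {c})) :=
  (ChainComplex.toSingle₀Equiv _ _).symm
    ⟨ModuleCat.ofHom (Ideal.span {c}).mkQ, by
      ext
      exact (Submodule.Quotient.mk_eq_zero _).2
        (Ideal.mem_span_singleton.2 ⟨1, smulComplex_d_one_zero_apply c 1⟩)⟩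

variable {c}

lemma mono_smul_id_iff (X : ModuleCat.{u} R) : Mono (c • 𝟙 X) ↔ IsSMulRegular X c := by
  rw [ModuleCat.mono_iff_injective]
  rfl

lemma mono_smulComplex_d_one_zero (hc : IsSMulRegular R c) : Mono ((smulComplex c).d 1 0) := by
  rw [smulComplex_d_one_zero]
  exact (mono_smul_id_iff (ModuleCat.of R R)).2 hc

lemma quasiIsoAt_smulComplexπ_zero : QuasiIsoAt (smulComplexπ c) 0 := by
  rw [ChainComplex.quasiIsoAt₀_iff, ShortComplex.quasiIso_iff_of_zeros' _ rfl rfl rfl]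
  constructor
  · rw [ShortComplex.moduleCat_exact_iff]
    intro x hx
    change (Ideal.span {c}).mkQ x = 0 at hx
    obtain ⟨y, rfl⟩ := Ideal.mem_span_singleton.1 ((Submodule.Quotient.mk_eq_zero _).1 hx)
    exact ⟨y, smulComplex_d_one_zero_apply c y⟩
  · exact (ModuleCat.epi_iff_surjective _).2 (Submodule.mkQ_surjective _)

noncomputable def projectiveResolutionQuotientSpanSingleton (hc : IsSMulRegular R c) :
    ProjectiveResolution (ModuleCat.of R (R ⧸ Ideal.span {c})) where
  complex := smulComplex c
  projective
    | 0 | 1 => ModuleCat.projective_of_free (Module.Basis.singleton Unit R)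
    | i + 2 => (isZero_smulComplex_X_add_two c i).projective
  π := smulComplexπ c
  quasiIso := ⟨fun
    | 0 => quasiIsoAt_smulComplexπ_zero
    | i + 1 => by
      rw [quasiIsoAt_iff_exactAt' _ _ (ChainComplex.exactAt_succ_single_obj _ _)]
      exact ChainComplex.exactAt_succ_of_mono_d_one_zero
        (mono_smulComplex_d_one_zero hc) (isZero_smulComplex_X_add_two c) i⟩

lemma mono_whiskerLeft_smul_id (X : ModuleCat.{u} R) (hX : IsSMulRegular X c) :
    Mono (X ◁ (c • 𝟙 (ModuleCat.of R R))) := by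
  have : Mono (c • 𝟙 X) := (mono_smul_id_iff X).2 hX
  have h : X ◁ (c • 𝟙 (𝟙_ (ModuleCat R))) = (ρ_ X).hom ≫ (c • 𝟙 X) ≫ (ρ_ X).inv := by
    simp
  change Mono (X ◁ (c • 𝟙 (𝟙_ (ModuleCat R))))
  rw [h]
  infer_instance

theorem isZero_tor_quotient_span_singleton (X : ModuleCat.{u} R) (hc : IsSMulRegular R c)
    (hX : IsSMulRegular X c) {s : ℕ} (hs : 1 ≤ s) :
    IsZero (((Tor (ModuleCat.{u} R) s).obj X).obj (ModuleCat.of R (R ⧸ Ideal.span {c}))) := by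
  obtain ⟨i, rfl⟩ := Nat.exists_eq_add_of_le' hs
  let F := (tensoringLeft (ModuleCat.{u} R)).obj X
  refine IsZero.of_iso ?_
    ((projectiveResolutionQuotientSpanSingleton hc).isoLeftDerivedObj F (i + 1))
  refine (HomologicalComplex.exactAt_iff_isZero_homology _ _).1 ?_
  refine ChainComplex.exactAt_succ_of_mono_d_one_zero ?_
    (fun j => F.map_isZero (isZero_smulComplex_X_add_two c j)) i
  rw [Functor.mapHomologicalComplex_obj_d]
  exact mono_whiskerLeft_smul_id X hX

end ModuleCat

theorem pow_sub_one_mul_eq_zero_of_sub_mul_eq_zero {A : Type*} [CommRing A] {u a f : A} {n : ℕ}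
    (hu : u ^ n = 1) (h : (u - a) * f = 0) : (a ^ n - 1) * f = 0 := by
  obtain ⟨k, hk⟩ := sub_dvd_pow_sub_pow u a n
  linear_combination (-k) * h + f * hu - f * hk

lemma ZMod.natCast_pow_eq_one {q : ℕ} (hq : q ≠ 0) (n : ℕ) :
    (q : ZMod (q ^ n - 1)) ^ n = 1 := by
  calc (q : ZMod (q ^ n - 1)) ^ n = ((q ^ n - 1 + 1 : ℕ) : ZMod (q ^ n - 1)) := by
        rw [Nat.sub_add_cancel (Nat.one_le_pow n q (Nat.pos_of_ne_zero hq)), Nat.cast_pow]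
    _ = 1 := by rw [Nat.cast_add, ZMod.natCast_self, zero_add, Nat.cast_one]

section CyclicGroupRing

variable {n : ℕ}

variable (n) in
noncomputable def cyclicGenerator : ℤ[Multiplicative (ZMod n)] := of ℤ _ (.ofAdd 1)

lemma cyclicGenerator_pow_self : cyclicGenerator n ^ n = 1 := by
  rw [cyclicGenerator, ← map_pow, ← ofAdd_nsmul, nsmul_one, ZMod.natCast_self]
  rfl

lemma cyclicGenerator_pow_val [NeZero n] (g : Multiplicative (ZMod n)) :
    cyclicGenerator n ^ g.toAdd.val = of ℤ _ g := by
  rw [cyclicGenerator, ← map_pow, ← ofAdd_nsmul, nsmul_one, ZMod.natCast_zmod_val, ofAdd_toAdd]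

lemma isSMulRegular_cyclicGenerator_sub {a : ℤ} (ha : a ^ n ≠ 1) :
    IsSMulRegular ℤ[Multiplicative (ZMod n)] (cyclicGenerator n - a) := by
  rw [isSMulRegular_iff_right_eq_zero_of_smul]
  intro f hf
  have h := pow_sub_one_mul_eq_zero_of_sub_mul_eq_zero cyclicGenerator_pow_self hf
  rw [← Int.cast_pow, ← Int.cast_one, ← Int.cast_sub, ← zsmul_eq_mul] at h
  exact (smul_eq_zero.1 h).resolve_left (sub_ne_zero.2 ha)

lemma intCast_pow_sub_one_mem_span (a : ℤ) :
    ((a ^ n - 1 : ℤ) : ℤ[Multiplicative (ZMod n)]) ∈ Ideal.span {cyclicGenerator n - a} := by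
  obtain ⟨k, hk⟩ := sub_dvd_pow_sub_pow (cyclicGenerator n) (a : ℤ[Multiplicative (ZMod n)]) n
  refine Ideal.mem_span_singleton'.2 ⟨-k, ?_⟩
  rw [cyclicGenerator_pow_self] at hk
  push_cast
  linear_combination hk

lemma exists_intCast_sub_mem_span [NeZero n] (a : ℤ) (f : ℤ[Multiplicative (ZMod n)]) :
    ∃ z : ℤ, f - z ∈ Ideal.span {cyclicGenerator n - a} := by
  induction f using MonoidAlgebra.induction_on with
  | of g =>
    refine ⟨a ^ g.toAdd.val, Ideal.mem_span_singleton.2 ?_⟩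
    rw [← cyclicGenerator_pow_val, Int.cast_pow]
    exact sub_dvd_pow_sub_pow _ _ _
  | add f g hf hg =>
    obtain ⟨z, hz⟩ := hf
    obtain ⟨w, hw⟩ := hg
    refine ⟨z + w, ?_⟩
    convert add_mem hz hw using 1
    push_cast
    ring
  | smul r f hf =>
    obtain ⟨z, hz⟩ := hf
    refine ⟨r * z, ?_⟩
    convert Ideal.mul_mem_left _ (r : ℤ[Multiplicative (ZMod n)]) hz using 1
    push_cast [zsmul_eq_mul]
    ring

end CyclicGroupRing

namespace Representation

variable {G : Type*} [Group G]

lemma asModuleEquiv_of_sub_intCast_smul {V : Type*} [AddCommGroup V] (ρ : Representation ℤ G V)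
    (g : G) (a : ℤ) (x : ρ.asModule) :
    ρ.asModuleEquiv ((of ℤ G g - a) • x) =
      ρ g (ρ.asModuleEquiv x) - a • ρ.asModuleEquiv x := by
  rw [asModuleEquiv_map_smul, map_sub, map_intCast, asAlgebraHom_of, LinearMap.sub_apply,
    Module.End.intCast_apply]

lemma isSMulRegular_trivial_of_sub_intCast (g : G) {a : ℤ} (ha : a ≠ 1) :
    IsSMulRegular (trivial ℤ G ℤ).asModule (of ℤ G g - a) := by
  rw [isSMulRegular_iff_right_eq_zero_of_smul]
  intro x hx
  have h := asModuleEquiv_of_sub_intCast_smul (trivial ℤ G ℤ) g a x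
  rw [hx, map_zero, trivial_apply, smul_eq_mul, ← one_sub_mul, eq_comm] at h
  exact (LinearEquiv.map_eq_zero_iff _).1 ((mul_eq_zero.1 h).resolve_left (sub_ne_zero.2 ha.symm))

section SmulOne

variable {m : ℕ} (ρ : Representation ℤ G (ZMod m))

noncomputable def smulOne : ℤ[G] →ₗ[ℤ[G]] ρ.asModule :=
  LinearMap.toSpanSingleton _ _ (ρ.asModuleEquiv.symm 1)

lemma asModuleEquiv_smulOne_intCast (z : ℤ) : ρ.asModuleEquiv (ρ.smulOne z) = z := by
  rw [smulOne, LinearMap.toSpanSingleton_apply, asModuleEquiv_map_smul, map_intCast,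
    Module.End.intCast_apply, LinearEquiv.apply_symm_apply, zsmul_one]

lemma smulOne_surjective : Function.Surjective ρ.smulOne := by
  intro x
  obtain ⟨z, hz⟩ := ZMod.intCast_surjective (ρ.asModuleEquiv x)
  exact ⟨z, ρ.asModuleEquiv.injective (by rw [asModuleEquiv_smulOne_intCast, hz])⟩

end SmulOne

section CyclicQuotient

variable {m n : ℕ} (ρ : Representation ℤ (Multiplicative (ZMod n)) (ZMod m)) {a : ℤ}

lemma span_le_ker_smulOne (hρ : ∀ x, ρ (.ofAdd 1) x = a * x) :
    Ideal.span {cyclicGenerator n - a} ≤ LinearMap.ker ρ.smulOne := by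
  rw [Ideal.span_singleton_le_iff_mem, LinearMap.mem_ker, ← ρ.asModuleEquiv.map_eq_zero_iff,
    smulOne, LinearMap.toSpanSingleton_apply, cyclicGenerator, asModuleEquiv_of_sub_intCast_smul,
    hρ, LinearEquiv.apply_symm_apply, zsmul_eq_mul, sub_self]

lemma ker_smulOne [NeZero n] (hρ : ∀ x, ρ (.ofAdd 1) x = a * x) (hm : a ^ n - 1 ∣ (m : ℤ)) :
    LinearMap.ker ρ.smulOne = Ideal.span {cyclicGenerator n - a} := by
  refine le_antisymm (fun f hf => ?_) (span_le_ker_smulOne ρ hρ)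
  obtain ⟨z, hz⟩ := exists_intCast_sub_mem_span a f
  have hz0 : ρ.smulOne z = 0 := by
    have := span_le_ker_smulOne ρ hρ hz
    rwa [LinearMap.mem_ker, map_sub, LinearMap.mem_ker.1 hf, zero_sub, neg_eq_zero] at this
  obtain ⟨k, rfl⟩ : a ^ n - 1 ∣ z := by
    refine hm.trans ((ZMod.intCast_zmod_eq_zero_iff_dvd z m).1 ?_)
    rw [← ρ.asModuleEquiv_smulOne_intCast z, hz0, map_zero]
  have hf : f = (f - ((a ^ n - 1) * k : ℤ)) +
      ((a ^ n - 1 : ℤ) : ℤ[Multiplicative (ZMod n)]) * k := by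
    push_cast
    ring
  rw [hf]
  exact add_mem hz (Ideal.mul_mem_right _ _ (intCast_pow_sub_one_mem_span a))

noncomputable def asModuleEquivQuotientSpan [NeZero n] (hρ : ∀ x, ρ (.ofAdd 1) x = a * x)
    (hm : a ^ n - 1 ∣ (m : ℤ)) :
    ρ.asModule ≃ₗ[ℤ[Multiplicative (ZMod n)]]
      ℤ[Multiplicative (ZMod n)] ⧸ Ideal.span {cyclicGenerator n - a} :=
  ((Submodule.quotEquivOfEq _ _ (ker_smulOne ρ hρ hm).symm).trans
    (ρ.smulOne.quotKerEquivOfSurjective ρ.smulOne_surjective)).symm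

end CyclicQuotient

end Representation

/-- Let `n ≥ 1`, `q ≥ 2`, `G = Multiplicative (ZMod n)`, and let `ρ`
be the ℤ-linear representation of `G` on `ZMod (q^n - 1)` where `Multiplicative.ofAdd j`
acts by multiplication by `q ^ j.val`.  Then the group homology `H_s(G; ρ)` vanishes
for all `s ≥ 1`. -/
theorem stmt_7 (n q : ℕ) (hn : 1 ≤ n) (hq : 2 ≤ q)
    (ρ : Representation ℤ (Multiplicative (ZMod n)) (ZMod (q ^ n - 1)))
    (hρ : ∀ (j : ZMod n) (x : ZMod (q ^ n - 1)),
      ρ (Multiplicative.ofAdd j) x = (q : ZMod (q ^ n - 1)) ^ j.val * x)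
    (s : ℕ) (hs : 1 ≤ s) :
    CategoryTheory.Limits.IsZero (groupHomology' (Rep.of ρ) s) := by
  have : NeZero n := ⟨by omega⟩
  have hqn : 1 < q ^ n := Nat.one_lt_pow (by omega) (by omega)
  have hgen : ∀ x, ρ (.ofAdd 1) x = ((q : ℤ) : ZMod (q ^ n - 1)) * x := fun x => by
    rw [hρ, ZMod.val_one_eq_one_mod, ← pow_eq_pow_mod 1 (ZMod.natCast_pow_eq_one (by omega) n),
      pow_one, Int.cast_natCast]
  have hm : (q : ℤ) ^ n - 1 ∣ ((q ^ n - 1 : ℕ) : ℤ) := by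
    rw [Nat.cast_sub hqn.le, Nat.cast_pow, Nat.cast_one]
  let e := (ρ.asModuleEquivQuotientSpan hgen hm).toModuleIso
  refine (ModuleCat.isZero_tor_quotient_span_singleton _ (isSMulRegular_cyclicGenerator_sub ?_)
    (Representation.isSMulRegular_trivial_of_sub_intCast _ ?_) hs).of_iso
    (((Tor _ s).obj _).mapIso e)
  · exact_mod_cast hqn.ne'
  · omega
end

section
/- Let n ≥ 1 and q ≥ 2 be integers. Let G be the cyclic group Multiplicative (ZMod n), and let ρ be the ℤ-linear representation of G on ZMod (q^n − 1) under which Multiplicative.ofAdd j acts by multiplication by q^(j.val). Then the zeroth group cohomology H^0(G; ρ) (equivalently, the invariants of ρ) and the zeroth group homology H_0(G; ρ) (equivalently, the coinvariants of ρ) are both isomorphic as abelian groups to ZMod (q − 1); explicitly, the invariants form the cyclic subgroup of ZMod (q^n − 1) generated by the image of the integer (q^n − 1)/(q − 1). -/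
/-!
The group is cyclic, generated by `ofAdd 1`, which acts as multiplication by `q`. So the
invariants are the kernel, and the coinvariants the cokernel, of multiplication by `q - 1` on
`ZMod (q ^ n - 1)`. As `q - 1` divides `q ^ n - 1`, the kernel is generated by
`(q ^ n - 1) / (q - 1)`, an element of order `q - 1`, and reduction modulo `q - 1` identifies
the cokernel with `ZMod (q - 1)`.
-/

theorem Multiplicative.mem_zpowers_ofAdd_one {n : ℕ} (x : Multiplicative (ZMod n)) :
    x ∈ Subgroup.zpowers (ofAdd 1) := by
  obtain ⟨k, hk⟩ := ZMod.intCast_surjective x.toAdd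
  exact ⟨k, by simp only [← ofAdd_zsmul, zsmul_one, hk, ofAdd_toAdd]⟩

namespace Representation

theorem span_range_sub_apply_eq_coinvariantsKer {k G V : Type*} [CommRing k]
    [Group G] [AddCommGroup V] [Module k V] (ρ : Representation k G V) :
    Submodule.span k (Set.range fun p : G × V => p.2 - ρ p.1 p.2) = Coinvariants.ker ρ := by
  rw [Coinvariants.ker, ← Submodule.span_neg, Set.neg_range]
  simp only [neg_sub]

variable {k R : Type*} [CommRing k] [CommRing R] [Algebra k R] {n : ℕ} {a : R}
  {ρ : Representation k (Multiplicative (ZMod n)) R}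

theorem apply_ofAdd_one_of_pow_eq_one (ha : a ^ n = 1)
    (hρ : ∀ (j : ZMod n) (x : R), ρ (.ofAdd j) x = a ^ j.val * x) (x : R) :
    ρ (.ofAdd 1) x = a * x := by
  rw [hρ, ZMod.val_one_eq_one_mod, ← pow_eq_pow_mod 1 ha, pow_one]

theorem mem_invariants_iff_sub_one_mul_eq_zero (ha : a ^ n = 1)
    (hρ : ∀ (j : ZMod n) (x : R), ρ (.ofAdd j) x = a ^ j.val * x) (x : R) :
    x ∈ ρ.invariants ↔ (a - 1) * x = 0 := by
  rw [mem_invariants_iff_of_forall_mem_zpowers ρ _ Multiplicative.mem_zpowers_ofAdd_one,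
    apply_ofAdd_one_of_pow_eq_one ha hρ, sub_mul, one_mul, sub_eq_zero]

theorem coinvariantsKer_eq_range_mulLeft [NeZero n] (ha : a ^ n = 1)
    (hρ : ∀ (j : ZMod n) (x : R), ρ (.ofAdd j) x = a ^ j.val * x) :
    Coinvariants.ker ρ = LinearMap.range (LinearMap.mulLeft k (a - 1)) := by
  rw [FiniteCyclicGroup.coinvariantsKer_eq_range ρ _ Multiplicative.mem_zpowers_ofAdd_one]
  congr 1
  ext x
  simp [apply_ofAdd_one_of_pow_eq_one ha hρ, sub_mul]

end Representation

namespace ZMod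

variable {d s m : ℕ} [NeZero m]

theorem natCast_mul_eq_zero_iff_mem_zmultiples (h : d * s = m) (x : ZMod m) :
    (d : ZMod m) * x = 0 ↔ x ∈ AddSubgroup.zmultiples (s : ZMod m) := by
  constructor
  · intro hx
    have hd : 0 < d := Nat.pos_of_ne_zero (left_ne_zero_of_mul (h ▸ NeZero.ne m))
    rw [← natCast_zmod_val x, ← Nat.cast_mul, natCast_eq_zero_iff] at hx
    obtain ⟨t, ht⟩ : s ∣ x.val := Nat.dvd_of_mul_dvd_mul_left hd (by rwa [h])
    rw [← natCast_zmod_val x, ht, Nat.cast_mul]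
    exact ⟨t, by simp [mul_comm]⟩
  · rintro ⟨t, rfl⟩
    rw [mul_smul_comm, ← Nat.cast_mul, h, natCast_self, smul_zero]

theorem card_zmultiples_natCast (h : d * s = m) :
    Nat.card (AddSubgroup.zmultiples (s : ZMod m)) = d := by
  have hs : 0 < s := Nat.pos_of_ne_zero (right_ne_zero_of_mul (h ▸ NeZero.ne m))
  rw [Nat.card_zmultiples, addOrderOf_coe _ (NeZero.ne m), ← h, Nat.gcd_mul_left_left,
    Nat.mul_div_cancel _ hs]

noncomputable def zmultiplesNatCastAddEquiv (h : d * s = m) :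
    AddSubgroup.zmultiples (s : ZMod m) ≃+ ZMod d :=
  (zmodAddCyclicAddEquiv inferInstance).symm.trans
    (ringEquivCongr (card_zmultiples_natCast h)).toAddEquiv

theorem range_mulLeft_natCast_eq_ker_castHom (h : d ∣ m) :
    LinearMap.range (LinearMap.mulLeft ℤ (d : ZMod m)) =
      LinearMap.ker (castHom h (ZMod d)).toAddMonoidHom.toIntLinearMap := by
  ext x
  simp only [LinearMap.mem_range, LinearMap.mulLeft_apply, LinearMap.mem_ker]
  constructor
  · rintro ⟨y, rfl⟩
    change castHom h (ZMod d) (d * y) = 0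
    rw [map_mul, map_natCast, natCast_self, zero_mul]
  · intro hx
    change castHom h (ZMod d) x = 0 at hx
    rw [← natCast_zmod_val x, map_natCast, natCast_eq_zero_iff] at hx
    obtain ⟨t, ht⟩ := hx
    exact ⟨t, by rw [← natCast_zmod_val x, ht, Nat.cast_mul]⟩

noncomputable def quotientRangeMulLeftNatCastEquiv (h : d ∣ m) :
    (ZMod m ⧸ LinearMap.range (LinearMap.mulLeft ℤ (d : ZMod m))) ≃ₗ[ℤ] ZMod d :=
  (Submodule.quotEquivOfEq _ _ (range_mulLeft_natCast_eq_ker_castHom h)).trans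
    (LinearMap.quotKerEquivOfSurjective _ (castHom_surjective h))

end ZMod

open Representation ZMod in
/-- Let `n ≥ 1`, `q ≥ 2`, `G = Multiplicative (ZMod n)`, and let `ρ`
be the ℤ-linear representation of `G` on `ZMod (q^n - 1)` where `Multiplicative.ofAdd j`
acts by multiplication by `q ^ j.val`.  Then the invariants of `ρ` (i.e. `H^0(G; ρ)`)
and the coinvariants of `ρ` (i.e. `H_0(G; ρ)`) are both isomorphic, as abelian groups,
to `ZMod (q - 1)`; explicitly, the invariants form the cyclic subgroup of
`ZMod (q^n - 1)` generated by the image of the integer `(q^n - 1)/(q - 1)`. -/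
theorem stmt_8 (n q : ℕ) (hn : 1 ≤ n) (hq : 2 ≤ q)
    (ρ : Representation ℤ (Multiplicative (ZMod n)) (ZMod (q ^ n - 1)))
    (hρ : ∀ (j : ZMod n) (x : ZMod (q ^ n - 1)),
      ρ (Multiplicative.ofAdd j) x = (q : ZMod (q ^ n - 1)) ^ j.val * x) :
    Nonempty (ρ.invariants ≃+ ZMod (q - 1)) ∧
    Nonempty ((ZMod (q ^ n - 1) ⧸
        Submodule.span ℤ (Set.range
          fun p : Multiplicative (ZMod n) × ZMod (q ^ n - 1) => p.2 - ρ p.1 p.2)) ≃+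
      ZMod (q - 1)) ∧
    (ρ.invariants : Set (ZMod (q ^ n - 1)))
      = (AddSubgroup.zmultiples ((((q ^ n - 1) / (q - 1) : ℕ)) : ZMod (q ^ n - 1)) :
          Set (ZMod (q ^ n - 1))) := by
  have hqn : 1 < q ^ n := Nat.one_lt_pow (by omega) (by omega)
  have : NeZero n := ⟨by omega⟩
  have : NeZero (q ^ n - 1) := ⟨by omega⟩
  have hdvd : q - 1 ∣ q ^ n - 1 := by simpa using Nat.sub_dvd_pow_sub_pow q 1 n
  have hmul : (q - 1) * ((q ^ n - 1) / (q - 1)) = q ^ n - 1 := Nat.mul_div_cancel' hdvd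
  have hpow : (q : ZMod (q ^ n - 1)) ^ n = 1 := by
    rw [← sub_eq_zero, ← Nat.cast_pow, ← Nat.cast_pred (by omega), natCast_self]
  have hsub : (q : ZMod (q ^ n - 1)) - 1 = ((q - 1 : ℕ) : ZMod (q ^ n - 1)) := by
    rw [Nat.cast_sub (by omega), Nat.cast_one]
  have hinv : ρ.invariants.toAddSubgroup =
      AddSubgroup.zmultiples (((q ^ n - 1) / (q - 1) : ℕ) : ZMod (q ^ n - 1)) := by
    ext x
    rw [Submodule.mem_toAddSubgroup, mem_invariants_iff_sub_one_mul_eq_zero hpow hρ, hsub,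
      natCast_mul_eq_zero_iff_mem_zmultiples hmul]
  refine ⟨⟨(AddEquiv.addSubgroupCongr hinv).trans (zmultiplesNatCastAddEquiv hmul)⟩, ?_,
    congrArg SetLike.coe hinv⟩
  rw [span_range_sub_apply_eq_coinvariantsKer, coinvariantsKer_eq_range_mulLeft hpow hρ, hsub]
  exact ⟨(quotientRangeMulLeftNatCastEquiv hdvd).toAddEquiv⟩
end

section
/- Let q ≥ 2 be an integer and let n be a positive even integer. Let G be the cyclic group Multiplicative (ZMod n), and let ρ be the ℤ-linear representation of G on ZMod (q^n − 1) under which Multiplicative.ofAdd j acts by multiplication by (−q)^(j.val). Then the group homology of G with coefficients in ρ vanishes in all positive degrees: H_s(G; ρ) ≅ 0 for every s ≥ 1. -/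
/-!
Write `σ` for the generator of `C_n = Multiplicative (ZMod n)` and `a = -q`, so that `σ` acts on
`M = ZMod m`, `m = q ^ n - 1 = a ^ n - 1`, by multiplication by `a`. Then `M ≅ ℤ[C_n] ⧸ (σ - a)`:
modulo `σ - a` every element of `ℤ[C_n]` is an integer, and `σ - a` divides
`σ ^ n - a ^ n = -m`. Since `m ≠ 0` and `ℤ[C_n]` is torsion-free, `σ - a` is a non-zero-divisor,
so `0 → ℤ[C_n] --(σ - a)--> ℤ[C_n] → M → 0` is a projective resolution of `M`. Tensoring it with
the trivial module `ℤ` gives `ℤ --(1 - a)--> ℤ`, which is injective as `a ≠ 1`; hence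
`Tor_s(ℤ, M) = 0` for all `s ≥ 1`.
-/

open CategoryTheory

open Limits MonoidalCategory ZeroObject

namespace ModuleCat

variable {R : Type} [CommRing R] (c : R)

noncomputable def mulComplexX : ℕ → ModuleCat.{0} R
  | 0 | 1 => ModuleCat.of R R
  | _ + 2 => 0

noncomputable def mulComplexD : ∀ k : ℕ, mulComplexX (R := R) (k + 1) ⟶ mulComplexX k
  | 0 => ModuleCat.ofHom (DistribSMul.toLinearMap R R c)
  | _ + 1 => 0

noncomputable def mulComplex : ChainComplex (ModuleCat.{0} R) ℕ :=
  ChainComplex.of mulComplexX (mulComplexD c) fun _ => zero_comp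

lemma mulComplex_d_one_zero :
    (mulComplex c).d 1 0 = ModuleCat.ofHom (DistribSMul.toLinearMap R R c) :=
  ChainComplex.of_d mulComplexX (mulComplexD c) 0

lemma isZero_mulComplex_X (k : ℕ) : IsZero ((mulComplex c).X (k + 2)) :=
  isZero_zero _

variable {c} {M : ModuleCat.{0} R} {x₀ : M}

noncomputable def mulComplexπ (hx₀ : c • x₀ = 0) :
    mulComplex c ⟶ (ChainComplex.single₀ (ModuleCat.{0} R)).obj M :=
  (ChainComplex.toSingle₀Equiv _ _).symm
    ⟨ModuleCat.ofHom (LinearMap.toSpanSingleton R M x₀), by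
      rw [mulComplex_d_one_zero]
      refine ModuleCat.hom_ext (LinearMap.ext fun (r : R) => ?_)
      change (c * r) • x₀ = 0
      rw [mul_comm, mul_smul, hx₀, smul_zero]⟩

lemma exactAt_mulComplex_one (hc : IsSMulRegular R c) : (mulComplex c).ExactAt 1 := by
  rw [HomologicalComplex.exactAt_iff' _ 2 1 0 (by simp) (by simp),
    ShortComplex.exact_iff_mono _ ((isZero_mulComplex_X c 0).eq_of_src _ _)]
  simp only [HomologicalComplex.shortComplexFunctor'_obj_g, mulComplex_d_one_zero]
  exact (ModuleCat.mono_iff_injective _).2 hc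

lemma quasiIsoAt_mulComplexπ_zero (hgen : ∀ x : M, ∃ r : R, r • x₀ = x)
    (hann : ∀ r : R, r • x₀ = 0 ↔ c ∣ r) : QuasiIsoAt (mulComplexπ ((hann c).2 dvd_rfl)) 0 := by
  rw [ChainComplex.quasiIsoAt₀_iff, ShortComplex.quasiIso_iff_of_zeros' _ rfl rfl rfl]
  refine ⟨?_, ?_⟩
  · rw [ShortComplex.moduleCat_exact_iff]
    intro (r : R) (hr : r • x₀ = 0)
    obtain ⟨w, rfl⟩ := (hann r).1 hr
    refine ⟨w, ?_⟩
    change (mulComplex c).d 1 0 w = c * w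
    rw [mulComplex_d_one_zero]
    rfl
  · refine (ModuleCat.epi_iff_surjective _).2 fun x => ?_
    obtain ⟨r, rfl⟩ := hgen x
    exact ⟨r, rfl⟩

noncomputable def mulProjectiveResolution (hc : IsSMulRegular R c)
    (hgen : ∀ x : M, ∃ r : R, r • x₀ = x) (hann : ∀ r : R, r • x₀ = 0 ↔ c ∣ r) :
    ProjectiveResolution M where
  complex := mulComplex c
  projective
    | 0 | 1 => ModuleCat.projective_of_free (Module.Basis.singleton PUnit.{1} R)
    | _ + 2 => (isZero_mulComplex_X c _).projective
  π := mulComplexπ ((hann c).2 dvd_rfl)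
  quasiIso := ⟨fun
    | 0 => quasiIsoAt_mulComplexπ_zero hgen hann
    | k + 1 => by
      rw [quasiIsoAt_iff_exactAt' _ _ (ChainComplex.exactAt_succ_single_obj _ _)]
      rcases k with _ | k
      · exact exactAt_mulComplex_one hc
      · exact ShortComplex.exact_of_isZero_X₂ _ (isZero_mulComplex_X c k)⟩

lemma isZero_Tor_succ_of_isSMulRegular (hc : IsSMulRegular R c)
    (hgen : ∀ x : M, ∃ r : R, r • x₀ = x) (hann : ∀ r : R, r • x₀ = 0 ↔ c ∣ r)
    (X : ModuleCat.{0} R) (hX : IsSMulRegular X c) (s : ℕ) :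
    IsZero (((Tor (ModuleCat.{0} R) (s + 1)).obj X).obj M) := by
  refine IsZero.of_iso ?_
    ((mulProjectiveResolution hc hgen hann).isoLeftDerivedObj ((tensoringLeft _).obj X) (s + 1))
  rw [HomologicalComplex.homologyFunctor_obj, ← HomologicalComplex.exactAt_iff_isZero_homology]
  rcases s with _ | s
  · have hX₂ := (tensoringLeft _).obj X |>.map_isZero (isZero_mulComplex_X c 0)
    rw [HomologicalComplex.exactAt_iff' _ 2 1 0 (by simp) (by simp),
      ShortComplex.exact_iff_mono _ (hX₂.eq_of_src _ _)]
    simp only [HomologicalComplex.shortComplexFunctor'_obj_g, Functor.mapHomologicalComplex_obj_d]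
    change Mono (X ◁ (mulComplex c).d 1 0)
    rw [mulComplex_d_one_zero, ModuleCat.mono_iff_injective]
    change Function.Injective ((DistribSMul.toLinearMap R R c).lTensor X)
    rw [LinearMap.lTensor_smul_action]
    exact (TensorProduct.rid R X).isSMulRegular_congr c |>.2 hX
  · exact .of_isZero ((tensoringLeft _).obj X |>.map_isZero (isZero_mulComplex_X c s))

end ModuleCat

namespace CyclicGroupRing

open MonoidAlgebra
open scoped MonoidAlgebra

variable {n : ℕ}

noncomputable def gen (n : ℕ) : ℤ[Multiplicative (ZMod n)] :=
  of ℤ _ (.ofAdd 1)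

lemma of_eq_gen_pow [NeZero n] (g : Multiplicative (ZMod n)) :
    of ℤ _ g = gen n ^ g.toAdd.val := by
  rw [gen, ← map_pow, ← ofAdd_nsmul, nsmul_one, ZMod.natCast_zmod_val, ofAdd_toAdd]

lemma gen_pow_self : gen n ^ n = 1 := by
  rw [gen, ← map_pow, ← ofAdd_nsmul, nsmul_one, ZMod.natCast_self, ofAdd_zero, map_one]

variable {m : ℕ} {a : ℤ}

lemma gen_sub_intCast_dvd (hm : (m : ℤ) = a ^ n - 1) :
    gen n - a ∣ (m : ℤ[Multiplicative (ZMod n)]) := by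
  have h : (m : ℤ[Multiplicative (ZMod n)]) =
      -(gen n ^ n - (a : ℤ[Multiplicative (ZMod n)]) ^ n) := by
    rw [gen_pow_self, ← Int.cast_natCast, hm]
    push_cast
    ring
  exact h ▸ (sub_dvd_pow_sub_pow _ _ n).neg_right

-- `gen n - a` divides the integer `m`, which is a non-zero-divisor since `ℤ[G]` is torsion-free.
lemma isSMulRegular_gen_sub_intCast (hm : (m : ℤ) = a ^ n - 1) (hm0 : m ≠ 0) :
    IsSMulRegular ℤ[Multiplicative (ZMod n)] (gen n - a) := by
  obtain ⟨w, hw⟩ := gen_sub_intCast_dvd hm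
  refine fun x y (hxy : _ * x = _ * y) => smul_right_injective _ hm0 ?_
  simp only [nsmul_eq_mul, hw, mul_comm _ w, mul_assoc, hxy]

lemma exists_gen_sub_intCast_dvd_sub_intCast [NeZero n] (a : ℤ)
    (r : ℤ[Multiplicative (ZMod n)]) : ∃ k : ℤ, gen n - a ∣ r - k := by
  induction r using MonoidAlgebra.induction_on with
  | of g =>
    refine ⟨a ^ g.toAdd.val, ?_⟩
    rw [of_eq_gen_pow, Int.cast_pow]
    exact sub_dvd_pow_sub_pow _ _ _
  | add f g hf hg =>
    obtain ⟨k, hk⟩ := hf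
    obtain ⟨l, hl⟩ := hg
    exact ⟨k + l, by simpa [add_sub_add_comm] using dvd_add hk hl⟩
  | smul b f hf =>
    obtain ⟨k, hk⟩ := hf
    refine ⟨b * k, ?_⟩
    simpa [zsmul_eq_mul, mul_sub] using hk.mul_left (b : ℤ[Multiplicative (ZMod n)])

variable {S : Type} [CommRing S]

noncomputable def aeval [NeZero n] (u : S) (hu : u ^ n = 1) :
    ℤ[Multiplicative (ZMod n)] →ₐ[ℤ] S :=
  lift ℤ S _
    { toFun g := u ^ g.toAdd.val
      map_one' := by simp
      map_mul' g h := by simp only [toAdd_mul, ZMod.val_add, ← pow_eq_pow_mod _ hu, pow_add] }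

lemma aeval_of [NeZero n] (u : S) (hu : u ^ n = 1) (g : Multiplicative (ZMod n)) :
    aeval u hu (of ℤ _ g) = u ^ g.toAdd.val :=
  lift_of _ _

lemma aeval_gen [NeZero n] (u : S) (hu : u ^ n = 1) : aeval u hu (gen n) = u := by
  rw [gen, aeval_of, toAdd_ofAdd, ZMod.val_one_eq_one_mod, ← pow_eq_pow_mod 1 hu, pow_one]

lemma intCast_pow_eq_one (hm : (m : ℤ) = a ^ n - 1) : (a : ZMod m) ^ n = 1 := by
  rw [← Int.cast_pow, ← sub_eq_zero, ← Int.cast_one, ← Int.cast_sub, ← hm, Int.cast_natCast,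
    ZMod.natCast_self]

-- Modulo `gen n - a` every `r` is an integer `k`, and `aeval` sends `k` to `k mod m`.
lemma aeval_eq_zero_iff [NeZero n] (hm : (m : ℤ) = a ^ n - 1) (r : ℤ[Multiplicative (ZMod n)]) :
    aeval (a : ZMod m) (intCast_pow_eq_one hm) r = 0 ↔ gen n - a ∣ r := by
  refine ⟨fun hr => ?_, fun ⟨w, hw⟩ => by simp [hw, aeval_gen]⟩
  obtain ⟨k, w, hw⟩ := exists_gen_sub_intCast_dvd_sub_intCast a r
  obtain ⟨l, rfl⟩ : (m : ℤ) ∣ k := by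
    rw [← ZMod.intCast_zmod_eq_zero_iff_dvd,
      ← map_intCast (aeval (a : ZMod m) (intCast_pow_eq_one hm)), ← sub_sub_cancel r k, hw]
    simp [hr, aeval_gen]
  simpa using dvd_add ⟨w, hw⟩ ((gen_sub_intCast_dvd hm).mul_right (l : ℤ[Multiplicative (ZMod n)]))

lemma isSMulRegular_gen_sub_intCast_trivial (ha : a ≠ 1) :
    IsSMulRegular (Rep.trivial ℤ (Multiplicative (ZMod n)) ℤ).ρ.asModule (gen n - a) := by
  let e := (Rep.trivial ℤ (Multiplicative (ZMod n)) ℤ).ρ.asModuleEquiv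
  intro z w h
  have h' := congrArg e h
  simp only [e, Representation.asModuleEquiv_map_smul, map_sub, map_intCast, gen,
    Representation.asAlgebraHom_of, Representation.trivial_apply, LinearMap.sub_apply,
    Module.End.intCast_apply, smul_eq_mul] at h'
  refine e.injective (mul_left_cancel₀ (sub_ne_zero.2 ha.symm) ?_)
  linear_combination h'

variable [NeZero n] (hm : (m : ℤ) = a ^ n - 1)
  {ρ : Representation ℤ (Multiplicative (ZMod n)) (ZMod m)}
  (hρ : ∀ (j : ZMod n) (x : ZMod m), ρ (.ofAdd j) x = ((a ^ j.val : ℤ) : ZMod m) * x)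
include hm hρ

lemma asModuleEquiv_smul (r : ℤ[Multiplicative (ZMod n)]) (x : ρ.asModule) :
    ρ.asModuleEquiv (r • x) =
      aeval (a : ZMod m) (intCast_pow_eq_one hm) r * ρ.asModuleEquiv x := by
  rw [Representation.asModuleEquiv_map_smul]
  induction r using MonoidAlgebra.induction_on with
  | of g =>
    rw [Representation.asAlgebraHom_of, aeval_of, ← ofAdd_toAdd g, hρ, Int.cast_pow, toAdd_ofAdd]
  | add f g hf hg => simp [hf, hg, add_mul]
  | smul b f hf => simp [hf, mul_assoc]

lemma asModuleEquiv_smul_symm_one (r : ℤ[Multiplicative (ZMod n)]) :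
    ρ.asModuleEquiv (r • ρ.asModuleEquiv.symm 1) =
      aeval (a : ZMod m) (intCast_pow_eq_one hm) r := by
  rw [asModuleEquiv_smul hm hρ, LinearEquiv.apply_symm_apply, mul_one]

lemma exists_smul_asModuleEquiv_symm_one_eq (x : ρ.asModule) :
    ∃ r : ℤ[Multiplicative (ZMod n)], r • ρ.asModuleEquiv.symm 1 = x := by
  refine ⟨((ρ.asModuleEquiv x).cast : ℤ), ρ.asModuleEquiv.injective ?_⟩
  rw [asModuleEquiv_smul_symm_one hm hρ, map_intCast, ZMod.intCast_zmod_cast]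

lemma smul_asModuleEquiv_symm_one_eq_zero_iff (r : ℤ[Multiplicative (ZMod n)]) :
    r • ρ.asModuleEquiv.symm 1 = 0 ↔ gen n - a ∣ r := by
  rw [← aeval_eq_zero_iff hm, ← asModuleEquiv_smul_symm_one hm hρ, LinearEquiv.map_eq_zero_iff]

end CyclicGroupRing

open CyclicGroupRing in
theorem isZero_groupHomology'_succ {n m : ℕ} [NeZero n] {a : ℤ} (hm : (m : ℤ) = a ^ n - 1)
    (hm0 : m ≠ 0) (ρ : Representation ℤ (Multiplicative (ZMod n)) (ZMod m))
    (hρ : ∀ (j : ZMod n) (x : ZMod m), ρ (.ofAdd j) x = ((a ^ j.val : ℤ) : ZMod m) * x)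
    (s : ℕ) : IsZero (groupHomology' (Rep.of ρ) (s + 1)) := by
  have ha : a ≠ 1 := by
    rintro rfl
    exact hm0 (by simpa using hm)
  exact ModuleCat.isZero_Tor_succ_of_isSMulRegular (isSMulRegular_gen_sub_intCast hm hm0)
    (exists_smul_asModuleEquiv_symm_one_eq hm hρ) (smul_asModuleEquiv_symm_one_eq_zero_iff hm hρ)
    _ (isSMulRegular_gen_sub_intCast_trivial ha) s

/-- Let `q ≥ 2`, `n > 0` even, `G = Multiplicative (ZMod n)`, and let
`ρ` be the ℤ-linear representation of `G` on `ZMod (q^n - 1)` where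
`Multiplicative.ofAdd j` acts by multiplication by `(-q) ^ j.val`.  Then the group
homology `H_s(G; ρ)` vanishes for all `s ≥ 1`. -/
theorem stmt_10 (n q : ℕ) (hn : 0 < n) (hne : Even n) (hq : 2 ≤ q)
    (ρ : Representation ℤ (Multiplicative (ZMod n)) (ZMod (q ^ n - 1)))
    (hρ : ∀ (j : ZMod n) (x : ZMod (q ^ n - 1)),
      ρ (Multiplicative.ofAdd j) x = (((-q : ℤ) ^ j.val : ℤ) : ZMod (q ^ n - 1)) * x)
    (s : ℕ) (hs : 1 ≤ s) :
    CategoryTheory.Limits.IsZero (groupHomology' (Rep.of ρ) s) := by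
  have : NeZero n := ⟨hn.ne'⟩
  have hqn : 1 < q ^ n := Nat.one_lt_pow hn.ne' (by omega)
  obtain ⟨s, rfl⟩ := Nat.exists_eq_add_of_le' hs
  refine isZero_groupHomology'_succ ?_ (by omega) ρ hρ s
  rw [hne.neg_pow, Nat.cast_sub hqn.le]
  push_cast
  ring
end

section
/- Let n ≥ 1 and q ≥ 2 be integers. Let G be the cyclic group Multiplicative (ZMod n), and let ρ be the ℤ-linear representation of G on ZMod (q^n − 1) under which Multiplicative.ofAdd j acts by multiplication by q^(j.val). Then the additive map ZMod (q^n − 1) → ZMod (q^n − 1) given by multiplication by the integer ∑_{j=0}^{n−1} q^j descends to a well-defined additive group isomorphism from the coinvariants of ρ onto the invariants of ρ. -/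
/-!
Write `s = ∑_{j<n} q^j`, so that `q^n - 1 = (q - 1) s` and `M = ℤ/(q^n - 1)`. Since the group is
cyclic, generated by `1`, which acts by `q`, the coinvariant relations span `(q - 1) M` and the
invariants are the `(q - 1)`-torsion of `M`. In `ℤ/(ab)` with `b ≠ 0`, the kernel of multiplication
by `b` is `aM`; applied both ways round, multiplication by `s` has kernel `(q - 1) M` and image the
`(q - 1)`-torsion, and the first isomorphism theorem gives the norm isomorphism.
-/

lemma pow_val_one_of_pow_eq_one {M : Type*} [Monoid M] {n : ℕ} {u : M} (hu : u ^ n = 1) :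
    u ^ (1 : ZMod n).val = u := by
  rw [ZMod.val_one_eq_one_mod, ← pow_eq_pow_mod 1 hu, pow_one]

theorem ZMod.natCast_mul_eq_zero_iff_exists {a b m : ℕ} (hm : a * b = m) (hb : b ≠ 0)
    (x : ZMod m) : (b : ZMod m) * x = 0 ↔ ∃ y, (a : ZMod m) * y = x := by
  subst hm
  constructor
  · intro hx
    rw [← ZMod.intCast_zmod_cast x, ← Int.cast_natCast, ← Int.cast_mul,
      ZMod.intCast_zmod_eq_zero_iff_dvd, Nat.cast_mul, mul_comm (b : ℤ)] at hx
    obtain ⟨c, hc⟩ := Int.dvd_of_mul_dvd_mul_right (by exact_mod_cast hb) hx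
    exact ⟨c, by rw [← ZMod.intCast_zmod_cast x, hc]; push_cast; ring⟩
  · rintro ⟨y, rfl⟩
    rw [← mul_assoc, ← Nat.cast_mul, mul_comm b, ZMod.natCast_self, zero_mul]

section CyclicAction

variable {R : Type*} [CommRing R] {n : ℕ} {u : R}
  {ρ : Representation ℤ (Multiplicative (ZMod n)) R}

theorem mem_invariants_iff_mul_eq_self
    (hρ : ∀ (j : ZMod n) (x : R), ρ (Multiplicative.ofAdd j) x = u ^ j.val * x)
    (hu : u ^ n = 1) (x : R) : x ∈ ρ.invariants ↔ u * x = x := by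
  refine ⟨fun hx => ?_, fun hx g => ?_⟩
  · simpa [hρ, pow_val_one_of_pow_eq_one hu] using hx (Multiplicative.ofAdd 1)
  · have hpow : ∀ k : ℕ, u ^ k * x = x := by
      intro k
      induction k with
      | zero => rw [pow_zero, one_mul]
      | succ k ih => rw [pow_succ', mul_assoc, ih, hx]
    exact (hρ g.toAdd x).trans (hpow _)

theorem span_sub_apply_eq_range_mulLeft
    (hρ : ∀ (j : ZMod n) (x : R), ρ (Multiplicative.ofAdd j) x = u ^ j.val * x)
    (hu : u ^ n = 1) :
    Submodule.span ℤ (Set.range fun p : Multiplicative (ZMod n) × R => p.2 - ρ p.1 p.2) =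
      LinearMap.range (LinearMap.mulLeft ℤ (u - 1)) := by
  apply le_antisymm
  · rw [Submodule.span_le]
    rintro _ ⟨⟨g, x⟩, rfl⟩
    -- `x - u^k x = (u - 1) · (-(∑_{i<k} u^i) x)` by the geometric sum
    refine ⟨-(∑ i ∈ Finset.range g.toAdd.val, u ^ i) * x, ?_⟩
    change (u - 1) * _ = x - ρ g x
    rw [show ρ g x = u ^ g.toAdd.val * x from hρ g.toAdd x]
    linear_combination (-x) * geom_sum_mul u g.toAdd.val
  · rintro _ ⟨y, rfl⟩
    refine Submodule.subset_span ⟨(Multiplicative.ofAdd 1, -y), ?_⟩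
    simp only [hρ, pow_val_one_of_pow_eq_one hu, LinearMap.mulLeft_apply]
    ring

end CyclicAction

/-- Let `n ≥ 1`, `q ≥ 2`, `G = Multiplicative (ZMod n)`, and let `ρ`
be the ℤ-linear representation of `G` on `ZMod (q^n - 1)` where `Multiplicative.ofAdd j`
acts by multiplication by `q ^ j.val`.  Then multiplication by the integer
`∑_{j=0}^{n-1} q^j` descends to a well-defined additive group isomorphism from the
coinvariants of `ρ` onto the invariants of `ρ`. -/
theorem stmt_13 (n q : ℕ) (hn : 1 ≤ n) (hq : 2 ≤ q)
    (ρ : Representation ℤ (Multiplicative (ZMod n)) (ZMod (q ^ n - 1)))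
    (hρ : ∀ (j : ZMod n) (x : ZMod (q ^ n - 1)),
      ρ (Multiplicative.ofAdd j) x = (q : ZMod (q ^ n - 1)) ^ j.val * x) :
    ∃ φ : (ZMod (q ^ n - 1) ⧸
            Submodule.span ℤ (Set.range
              fun p : Multiplicative (ZMod n) × ZMod (q ^ n - 1) => p.2 - ρ p.1 p.2)) ≃+
          ρ.invariants,
      ∀ x : ZMod (q ^ n - 1),
        (φ (Submodule.Quotient.mk x) : ZMod (q ^ n - 1))
          = ((∑ j ∈ Finset.range n, q ^ j : ℕ) : ZMod (q ^ n - 1)) * x := by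
  have hs : (∑ j ∈ Finset.range n, q ^ j) * (q - 1) = q ^ n - 1 := by
    rw [Nat.geomSum_eq hq, Nat.div_mul_cancel (Nat.sub_one_dvd_pow_sub_one q n)]
  set s := ∑ j ∈ Finset.range n, q ^ j
  have hs0 : s ≠ 0 := (Finset.sum_pos (fun j _ => by positivity) (by simp; omega)).ne'
  have hq1 : ((q - 1 : ℕ) : ZMod (q ^ n - 1)) = q - 1 := Nat.cast_pred (by omega)
  have hu : (q : ZMod (q ^ n - 1)) ^ n = 1 := by
    have h := ZMod.natCast_self (q ^ n - 1)
    rwa [Nat.cast_pred (by positivity), Nat.cast_pow, sub_eq_zero] at h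
  let f := LinearMap.mulLeft ℤ (s : ZMod (q ^ n - 1))
  have hker : LinearMap.ker f = Submodule.span ℤ (Set.range
      fun p : Multiplicative (ZMod n) × ZMod (q ^ n - 1) => p.2 - ρ p.1 p.2) := by
    ext x
    rw [span_sub_apply_eq_range_mulLeft hρ hu, LinearMap.mem_ker, LinearMap.mulLeft_apply,
      ZMod.natCast_mul_eq_zero_iff_exists ((mul_comm _ _).trans hs) hs0, hq1]
    rfl
  have hrange : LinearMap.range f = ρ.invariants := by
    ext x
    rw [mem_invariants_iff_mul_eq_self hρ hu, ← sub_eq_zero, ← sub_one_mul, ← hq1,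
      ZMod.natCast_mul_eq_zero_iff_exists hs (by omega)]
    rfl
  exact ⟨((Submodule.quotEquivOfEq _ _ hker.symm).trans
    (f.quotKerEquivRange.trans (LinearEquiv.ofEq _ _ hrange))).toAddEquiv, fun x => rfl⟩
end

section
/- Let q ≥ 2 be an integer and let n be a positive even integer. Let G be the cyclic group Multiplicative (ZMod n), and let ρ be the ℤ-linear representation of G on ZMod (q^n − 1) under which Multiplicative.ofAdd j acts by multiplication by (−q)^(j.val). Then the additive map ZMod (q^n − 1) → ZMod (q^n − 1) given by multiplication by the integer ∑_{j=0}^{n−1} (−q)^j descends to a well-defined additive group isomorphism from the coinvariants of ρ onto the invariants of ρ. -/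
/-!
Write `t = -q`, `N = q ^ n - 1` and `S = ∑_{j<n} t ^ j`. The group is cyclic, generated by an
element acting as multiplication by `t`, so the coinvariant relations span the ideal `(t - 1)` and
the invariants are the annihilator of `t - 1`. Since `n` is even, `(t - 1) S = t ^ n - 1 = N`, and in
`ℤ / N` multiplication by `S` has kernel `(t - 1)` and image the annihilator of `t - 1`.
-/

namespace Representation

variable {k G V : Type*} [CommRing k] [Group G] [AddCommGroup V] [Module k V]
  (ρ : Representation k G V) {g₀ : G}

theorem invariants_eq_ker_sub_one_of_forall_mem_powers (hg : ∀ g, g ∈ Submonoid.powers g₀) :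
    ρ.invariants = LinearMap.ker (ρ g₀ - 1) := by
  ext v
  simp only [mem_invariants, LinearMap.mem_ker, LinearMap.sub_apply, Module.End.one_apply,
    sub_eq_zero]
  refine ⟨fun hv => hv g₀, fun hv g => ?_⟩
  obtain ⟨m, rfl⟩ := hg g
  rw [map_pow, Module.End.pow_apply, Function.iterate_fixed hv]

theorem span_range_sub_eq_range_sub_one_of_forall_mem_powers (hg : ∀ g, g ∈ Submonoid.powers g₀) :
    Submodule.span k (Set.range fun p : G × V => p.2 - ρ p.1 p.2) =
      LinearMap.range (ρ g₀ - 1) := by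
  apply le_antisymm
  · rw [Submodule.span_le]
    rintro _ ⟨⟨g, v⟩, rfl⟩
    obtain ⟨m, rfl⟩ := hg g
    refine ⟨(∑ i ∈ Finset.range m, ρ g₀ ^ i) (-v), ?_⟩
    rw [← Module.End.mul_apply, mul_geom_sum]
    simp only [map_pow, LinearMap.sub_apply, map_neg, Module.End.one_apply]
    abel
  · rintro _ ⟨v, rfl⟩
    rw [LinearMap.sub_apply, Module.End.one_apply, ← neg_sub]
    exact Submodule.neg_mem _ (Submodule.subset_span ⟨(g₀, v), rfl⟩)

end Representation

theorem ZMod.mem_powers_ofAdd_one {n : ℕ} [NeZero n] (g : Multiplicative (ZMod n)) :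
    g ∈ Submonoid.powers (Multiplicative.ofAdd 1) :=
  ⟨g.toAdd.val, by simp only; rw [← ofAdd_nsmul, nsmul_one, ZMod.natCast_zmod_val]; rfl⟩

theorem ZMod.ker_mulLeft_eq_range_mulLeft {N : ℕ} [NeZero N] {a b : ℤ} (hab : a * b = N) :
    LinearMap.ker (LinearMap.mulLeft ℤ (a : ZMod N)) =
      LinearMap.range (LinearMap.mulLeft ℤ (b : ZMod N)) := by
  have ha : a ≠ 0 := by
    rintro rfl
    exact NeZero.ne N (by exact_mod_cast hab.symm.trans (zero_mul b))
  ext x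
  simp only [LinearMap.mem_ker, LinearMap.mem_range, LinearMap.mulLeft_apply]
  constructor
  · obtain ⟨m, rfl⟩ := ZMod.intCast_surjective x
    intro h
    rw [← Int.cast_mul, ZMod.intCast_zmod_eq_zero_iff_dvd, ← hab] at h
    obtain ⟨c, rfl⟩ := (mul_dvd_mul_iff_left ha).mp h
    exact ⟨c, by push_cast; rfl⟩
  · rintro ⟨y, rfl⟩
    rw [← mul_assoc, ← Int.cast_mul, hab, Int.cast_natCast, ZMod.natCast_self, zero_mul]

/-- Let `q ≥ 2`, `n > 0` even, `G = Multiplicative (ZMod n)`, and let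
`ρ` be the ℤ-linear representation of `G` on `ZMod (q^n - 1)` where
`Multiplicative.ofAdd j` acts by multiplication by `(-q) ^ j.val`.  Then multiplication
by the integer `∑_{j=0}^{n-1} (-q)^j` descends to a well-defined additive group
isomorphism from the coinvariants of `ρ` onto the invariants of `ρ`. -/
theorem stmt_14 (n q : ℕ) (hn : 0 < n) (hne : Even n) (hq : 2 ≤ q)
    (ρ : Representation ℤ (Multiplicative (ZMod n)) (ZMod (q ^ n - 1)))
    (hρ : ∀ (j : ZMod n) (x : ZMod (q ^ n - 1)),
      ρ (Multiplicative.ofAdd j) x = (((-q : ℤ) ^ j.val : ℤ) : ZMod (q ^ n - 1)) * x) :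
    ∃ φ : (ZMod (q ^ n - 1) ⧸
            Submodule.span ℤ (Set.range
              fun p : Multiplicative (ZMod n) × ZMod (q ^ n - 1) => p.2 - ρ p.1 p.2)) ≃+
          ρ.invariants,
      ∀ x : ZMod (q ^ n - 1),
        (φ (Submodule.Quotient.mk x) : ZMod (q ^ n - 1))
          = (((∑ j ∈ Finset.range n, (-q : ℤ) ^ j : ℤ)) : ZMod (q ^ n - 1)) * x := by
  have hn1 : 1 < n := by obtain ⟨k, rfl⟩ := hne; omega
  have hqn : 1 < q ^ n := Nat.one_lt_pow hn.ne' hq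
  have : NeZero n := ⟨hn.ne'⟩
  have : NeZero (q ^ n - 1) := ⟨by omega⟩
  have hnorm : (-q - 1 : ℤ) * ∑ j ∈ Finset.range n, (-q : ℤ) ^ j = ((q ^ n - 1 : ℕ) : ℤ) := by
    rw [mul_geom_sum, hne.neg_pow]
    push_cast [hqn.le]
    rfl
  have hgen : ρ (Multiplicative.ofAdd 1) - 1 =
      LinearMap.mulLeft ℤ ((-q - 1 : ℤ) : ZMod (q ^ n - 1)) := by
    ext x
    rw [LinearMap.sub_apply, hρ, ZMod.val_one_eq_one_mod, Nat.mod_eq_of_lt hn1]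
    simp [sub_mul]
  rw [ρ.span_range_sub_eq_range_sub_one_of_forall_mem_powers ZMod.mem_powers_ofAdd_one,
    ρ.invariants_eq_ker_sub_one_of_forall_mem_powers ZMod.mem_powers_ofAdd_one, hgen,
    ← ZMod.ker_mulLeft_eq_range_mulLeft ((mul_comm _ _).trans hnorm),
    ZMod.ker_mulLeft_eq_range_mulLeft hnorm]
  exact ⟨(LinearMap.quotKerEquivRange _).toAddEquiv, fun _ => rfl⟩
end
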